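/- Let n, p ∈ ℕ, x₁,…,xₙ ∈ ℝᵖ, s₁,…,sₙ ≥ 0, m₁,…,mₙ ≥ 0, y₁,…,yₙ ∈ ℝ, uᵢ = yᵢ − mᵢ/2, and P : ℝᵖ → ℝ. Fix βₜ ∈ ℝᵖ, suppose β′ maximizes Q(β) = Σᵢ sᵢ uᵢ xᵢᵀβ − (1/2) Σᵢ sᵢ ω(xᵢᵀβₜ, mᵢ)(xᵢᵀβ)² − P(β) over β ∈ ℝᵖ, and suppose ρ′ ∈ ℝ maximizes ρ ↦ pℓ(ρ·β′) over ℝ. Then pℓ(ρ′·β′) ≥ pℓ(β′) ≥ pℓ(βₜ). That is, the PX-ECME update (EM update followed by an optimal scalar rescaling) increases the penalized weighted log-likelihood at every iteration. -/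

import Mathlib

/-! Since `log (1 + exp t) = t / 2 + log 2 + log (cosh (t / 2))` and `tanh x / x` decreases on
`(0, ∞)`, the function `t ↦ log (1 + exp t)` lies below the quadratic `q` with `t²`-coefficient
`omegaPG t₀ 1 / 2` that is tangent to it at `t₀`. Summing, `Qfun βt` plus a constant minorizes
`pLogLik` with equality at `βt`, so maximizing `Qfun βt` cannot decrease `pLogLik`; the rescaling
cannot decrease it either, since `ρ = 1` is a candidate. -/

open Matrix

/-- The Pólya-Gamma EM weight function: ω(t,m) = (m/(2t))·tanh(t/2) for t ≠ 0,
and ω(0,m) = m/4. -/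
noncomputable def omegaPG (t m : ℝ) : ℝ :=
  if t = 0 then m / 4 else m / (2 * t) * Real.tanh (t / 2)

/-- The penalized weighted observed log-likelihood
pℓ(β) = Σᵢ sᵢ[yᵢ xᵢᵀβ − mᵢ log(1 + exp(xᵢᵀβ))] − P(β). -/
noncomputable def pLogLik (n p : ℕ) (x : Fin n → Fin p → ℝ) (s m y : Fin n → ℝ)
    (P : (Fin p → ℝ) → ℝ) (β : Fin p → ℝ) : ℝ :=
  (∑ i, s i * (y i * (x i ⬝ᵥ β) - m i * Real.log (1 + Real.exp (x i ⬝ᵥ β)))) - P β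

/-- The penalized Pólya-Gamma Q-function at current iterate βₜ:
Q(β) = Σᵢ sᵢ uᵢ xᵢᵀβ − (1/2) Σᵢ sᵢ ω(xᵢᵀβₜ, mᵢ)(xᵢᵀβ)² − P(β), with uᵢ = yᵢ − mᵢ/2. -/
noncomputable def Qfun (n p : ℕ) (x : Fin n → Fin p → ℝ) (s m y : Fin n → ℝ)
    (P : (Fin p → ℝ) → ℝ) (βt : Fin p → ℝ) (β : Fin p → ℝ) : ℝ :=
  (∑ i, s i * (y i - m i / 2) * (x i ⬝ᵥ β))
    - (1 / 2) * (∑ i, s i * omegaPG (x i ⬝ᵥ βt) (m i) * (x i ⬝ᵥ β) ^ 2) - P β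

open Real Set

namespace Real

lemma hasDerivAt_tanh (x : ℝ) : HasDerivAt tanh (cosh x ^ 2)⁻¹ x := by
  rw [show tanh = fun y => sinh y / cosh y from funext tanh_eq_sinh_div_cosh]
  refine ((hasDerivAt_sinh x).div (hasDerivAt_cosh x) (cosh_pos x).ne').congr_deriv ?_
  rw [← sq, ← sq, cosh_sq_sub_sinh_sq, one_div]

lemma hasDerivAt_log_cosh (x : ℝ) : HasDerivAt (fun y => log (cosh y)) (tanh x) x := by
  simpa [← tanh_eq_sinh_div_cosh] using (hasDerivAt_cosh x).log (cosh_pos x).ne'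

lemma self_le_sinh_mul_cosh {a : ℝ} (ha : 0 ≤ a) : a ≤ sinh a * cosh a := by
  have h := self_le_sinh_iff.2 (by linarith : 0 ≤ 2 * a)
  rw [sinh_two_mul] at h
  linarith

lemma antitoneOn_tanh_div_self : AntitoneOn (fun x => tanh x / x) (Ioi 0) := by
  intro b hb a _ hba
  rw [mem_Ioi] at hb
  have hf : ∀ x, HasDerivAt (fun x => x * tanh b - b * tanh x)
      (tanh b - b * (cosh x ^ 2)⁻¹) x := fun x =>
    (((hasDerivAt_id' x).mul_const (tanh b)).sub ((hasDerivAt_tanh x).const_mul b)).congr_deriv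
      (by rw [one_mul])
  have hmono : MonotoneOn (fun x => x * tanh b - b * tanh x) (Ici b) := by
    refine monotoneOn_of_hasDerivWithinAt_nonneg (convex_Ici b)
      (fun x _ => (hf x).continuousAt.continuousWithinAt) (fun x _ => (hf x).hasDerivWithinAt) ?_
    intro x hx
    rw [interior_Ici, mem_Ioi] at hx
    have hcosh : cosh b ≤ cosh x := by
      rw [cosh_le_cosh, abs_of_pos hb, abs_of_pos (hb.trans hx)]
      exact hx.le
    have htanh : tanh b * cosh b ^ 2 = sinh b * cosh b := by
      rw [tanh_eq_sinh_div_cosh]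
      field_simp
    rw [sub_nonneg]
    calc b * (cosh x ^ 2)⁻¹ ≤ b * (cosh b ^ 2)⁻¹ := by gcongr
      _ ≤ tanh b := by
        rw [← div_eq_mul_inv, div_le_iff₀ (by positivity), htanh]
        exact self_le_sinh_mul_cosh hb.le
  have := hmono self_mem_Ici (mem_Ici.2 hba) hba
  simp only [sub_self] at this
  rw [div_le_div_iff₀ (hb.trans_le hba) hb]
  linarith

/-- `tanh b / (2 * b)` is the slope at `v = b ^ 2` of the concave function `v ↦ log (cosh √v)`. -/
lemma log_cosh_le_of_pos {a b : ℝ} (ha : 0 ≤ a) (hb : 0 < b) :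
    log (cosh a) ≤ log (cosh b) + tanh b / (2 * b) * (a ^ 2 - b ^ 2) := by
  set f : ℝ → ℝ := fun x => tanh b / (2 * b) * x ^ 2 - log (cosh x)
  have hf : ∀ x, HasDerivAt f (tanh b / b * x - tanh x) x := fun x =>
    (((hasDerivAt_pow 2 x).const_mul _).sub (hasDerivAt_log_cosh x)).congr_deriv
      (by field_simp; ring)
  have key : f b ≤ f a := by
    rcases le_total b a with hba | hab
    · refine monotoneOn_of_hasDerivWithinAt_nonneg (convex_Ici b)
        (fun x _ => (hf x).continuousAt.continuousWithinAt) (fun x _ => (hf x).hasDerivWithinAt)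
        ?_ self_mem_Ici hba hba
      intro x hx
      rw [interior_Ici, mem_Ioi] at hx
      rw [sub_nonneg, ← div_le_iff₀ (hb.trans hx)]
      exact antitoneOn_tanh_div_self hb (hb.trans hx) hx.le
    · refine antitoneOn_of_hasDerivWithinAt_nonpos (convex_Icc 0 b)
        (fun x _ => (hf x).continuousAt.continuousWithinAt) (fun x _ => (hf x).hasDerivWithinAt)
        ?_ ⟨ha, hab⟩ ⟨ha.trans hab, le_rfl⟩ hab
      intro x hx
      rw [interior_Icc, mem_Ioo] at hx
      rw [sub_nonpos, ← le_div_iff₀ hx.1]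
      exact antitoneOn_tanh_div_self hx.1 hb hx.2.le
  simp only [f] at key
  linarith

lemma log_cosh_le_sq_half (a : ℝ) : log (cosh a) ≤ a ^ 2 / 2 :=
  (log_le_iff_le_exp (cosh_pos a)).2 (cosh_le_exp_half_sq a)

lemma log_cosh_le_of_ne_zero (a : ℝ) {b : ℝ} (hb : b ≠ 0) :
    log (cosh a) ≤ log (cosh b) + tanh b / (2 * b) * (a ^ 2 - b ^ 2) := by
  have h := log_cosh_le_of_pos (abs_nonneg a) (abs_pos.2 hb)
  have hcoef : tanh |b| / (2 * |b|) = tanh b / (2 * b) := by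
    rcases abs_cases b with ⟨h, _⟩ | ⟨h, _⟩ <;> simp [h, tanh_neg, neg_div_neg_eq]
  rwa [cosh_abs, cosh_abs, sq_abs, sq_abs, hcoef] at h

lemma log_one_add_exp_eq (t : ℝ) :
    log (1 + exp t) = t / 2 + log 2 + log (cosh (t / 2)) := by
  have h : 1 + exp t = exp (t / 2) * (2 * cosh (t / 2)) := by
    rw [cosh_eq, mul_div_cancel₀ _ two_ne_zero, mul_add, ← exp_add, ← exp_add, add_halves,
      add_neg_cancel, exp_zero, add_comm]
  rw [h, log_mul (exp_ne_zero _) (by positivity), log_exp, log_mul two_ne_zero (cosh_pos _).ne']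
  ring

end Real

lemma omegaPG_eq_mul (t m : ℝ) : omegaPG t m = m * omegaPG t 1 := by
  unfold omegaPG
  split_ifs <;> ring

lemma log_one_add_exp_le (t t₀ : ℝ) :
    log (1 + exp t) ≤ log (1 + exp t₀) + (t - t₀) / 2 + omegaPG t₀ 1 / 2 * (t ^ 2 - t₀ ^ 2) := by
  rw [log_one_add_exp_eq, log_one_add_exp_eq, omegaPG]
  split_ifs with ht₀
  · subst ht₀
    have := log_cosh_le_sq_half (t / 2)
    simp only [zero_div, cosh_zero, log_one]
    linarith
  · have := log_cosh_le_of_ne_zero (t / 2) (div_ne_zero ht₀ two_ne_zero)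
    have hcoef : tanh (t₀ / 2) / (2 * (t₀ / 2)) * ((t / 2) ^ 2 - (t₀ / 2) ^ 2)
        = 1 / (2 * t₀) * tanh (t₀ / 2) / 2 * (t ^ 2 - t₀ ^ 2) := by
      field_simp
    linarith

section Minorization

variable {n p : ℕ} (x : Fin n → Fin p → ℝ) (s m y : Fin n → ℝ) (P : (Fin p → ℝ) → ℝ)
  (βt : Fin p → ℝ)

lemma pLogLik_sub_Qfun (β : Fin p → ℝ) :
    pLogLik n p x s m y P β - Qfun n p x s m y P βt β =
      ∑ i, s i * (m i * ((x i ⬝ᵥ β) / 2 - log (1 + exp (x i ⬝ᵥ β)))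
        + omegaPG (x i ⬝ᵥ βt) (m i) / 2 * (x i ⬝ᵥ β) ^ 2) := by
  simp only [pLogLik, Qfun, Finset.mul_sum, sub_sub_sub_cancel_right, ← Finset.sum_sub_distrib]
  exact Finset.sum_congr rfl fun i _ => by ring

lemma pLogLik_sub_Qfun_le (hs : ∀ i, 0 ≤ s i) (hm : ∀ i, 0 ≤ m i) (β : Fin p → ℝ) :
    pLogLik n p x s m y P βt - Qfun n p x s m y P βt βt ≤
      pLogLik n p x s m y P β - Qfun n p x s m y P βt β := by
  rw [pLogLik_sub_Qfun, pLogLik_sub_Qfun]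
  refine Finset.sum_le_sum fun i _ => mul_le_mul_of_nonneg_left ?_ (hs i)
  have := mul_le_mul_of_nonneg_left (log_one_add_exp_le (x i ⬝ᵥ β) (x i ⬝ᵥ βt)) (hm i)
  rw [omegaPG_eq_mul]
  linarith

end Minorization

/-- The PX-ECME update (EM update followed by an optimal scalar rescaling)
increases the penalized weighted log-likelihood at every iteration. -/
theorem pxecme_update_increases_penalized_loglik (n p : ℕ) (x : Fin n → Fin p → ℝ)
    (s m y : Fin n → ℝ) (hs : ∀ i, 0 ≤ s i) (hm : ∀ i, 0 ≤ m i)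
    (P : (Fin p → ℝ) → ℝ) (βt β' : Fin p → ℝ) (ρ' : ℝ)
    (hmax : ∀ β : Fin p → ℝ, Qfun n p x s m y P βt β ≤ Qfun n p x s m y P βt β')
    (hρ : ∀ ρ : ℝ, pLogLik n p x s m y P (ρ • β') ≤ pLogLik n p x s m y P (ρ' • β')) :
    pLogLik n p x s m y P (ρ' • β') ≥ pLogLik n p x s m y P β' ∧
      pLogLik n p x s m y P β' ≥ pLogLik n p x s m y P βt := by
  refine ⟨by simpa using hρ 1, ?_⟩
  have hminor := pLogLik_sub_Qfun_le x s m y P βt hs hm β'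
  linarith [hmax βt]
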